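/- For each n ≥ 3, let Γₙ be the prism graph, i.e., the Cayley graph of the dihedral group D_{2n} = ⟨a, b | aⁿ = b² = (ab)² = 1⟩ with connection set S = {a, a⁻¹, b}. Then Γₙ is a connected 3-regular vertex-transitive graph on 2n vertices, and its 2-independence number equals α₂(Γₙ) = 2⌊n/4⌋ if n ≡ 0, 1, 2 (mod 4), and α₂(Γₙ) = 2⌊n/4⌋ + 1 if n ≡ 3 (mod 4). -/

import Mathlib

/-!
Write `r i` and `sr i` for the vertex in column `i` of the two `n`-cycles of the prism. In a
Cayley graph `d(u, v) ≤ 2` iff `u v⁻¹ ∈ (S ∪ {1})²`; for the prism this says that two distinct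
vertices are at distance at most two iff their columns are at cyclic distance at most two within
a cycle, or at most one across the cycles. So a set at pairwise distance at least
three meets each column at most once and never two consecutive columns, whence `2 |s| ≤ n`.
If `2 |s| = n`, the occupied columns are every other one and consecutive occupied columns lie on
different cycles; going once around the `n / 2` occupied columns this is impossible when `n / 2`
is odd, i.e. when `n ≡ 2 mod 4`. Conversely, placing vertices in columns `0, 2, 4, …`
alternately on the two cycles gives sets of every size allowed by these bounds.
-/

open Polynomial Finset

/-- The independence number of a simple graph: the maximum size of a set of
pairwise non-adjacent vertices. -/
noncomputable def SimpleGraph.indepNumFin {V : Type*} [Fintype V] (G : SimpleGraph V) : ℕ :=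
  sSup {m | ∃ s : Finset V, s.card = m ∧ ∀ u ∈ s, ∀ v ∈ s, ¬ G.Adj u v}

/-- The `k`-th power of a graph: distinct vertices are adjacent iff
their distance in `G` is (finite and) at most `k`. -/
def SimpleGraph.power {V : Type*} (G : SimpleGraph V) (k : ℕ) : SimpleGraph V where
  Adj u v := u ≠ v ∧ G.Reachable u v ∧ G.dist u v ≤ k
  symm := by
    refine ⟨?_⟩
    intro u v ⟨h1, h2, h3⟩
    exact ⟨h1.symm, h2.symm, by rwa [SimpleGraph.dist_comm]⟩
  loopless := by refine ⟨?_⟩; intro u ⟨h, _⟩; exact h rfl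

/-- The `k`-independence number: the maximum size of a set of vertices at
pairwise distance greater than `k`. -/
noncomputable def SimpleGraph.kIndepNum {V : Type*} [Fintype V] (G : SimpleGraph V) (k : ℕ) : ℕ :=
  (G.power k).indepNumFin
/-- The prism graph `Γₙ`: the Cayley graph of the dihedral group
`D_{2n} = ⟨a, b | aⁿ = b² = (ab)² = 1⟩` with connection set `S = {a, a⁻¹, b}`,
where `a = r 1` and `b = sr 0`. -/
def prism (n : ℕ) : SimpleGraph (DihedralGroup n) where
  Adj u v := u ≠ v ∧ u * v⁻¹ ∈
    ({DihedralGroup.r 1, (DihedralGroup.r 1)⁻¹, DihedralGroup.sr 0} :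
      Set (DihedralGroup n))
  symm := by
    refine ⟨?_⟩
    rintro u v ⟨hne, hs⟩
    refine ⟨hne.symm, ?_⟩
    have h : v * u⁻¹ = (u * v⁻¹)⁻¹ := by group
    rw [h]
    rcases hs with h1 | h1 | h1 <;> rw [h1] <;>
      simp [Set.mem_insert_iff, Set.mem_singleton_iff] <;> exact Or.inr rfl
  loopless := by refine ⟨?_⟩; rintro u ⟨h, -⟩; exact h rfl

open DihedralGroup SimpleGraph
open scoped Pointwise

namespace SimpleGraph

variable {V : Type*} {G : SimpleGraph V} {u v : V}

lemma edist_le_two_iff_exists : G.edist u v ≤ 2 ↔ ∃ w, G.edist u w ≤ 1 ∧ G.edist w v ≤ 1 := by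
  constructor
  · intro h
    obtain ⟨p, hp⟩ := exists_walk_of_edist_ne_top (h.trans_lt (by decide)).ne
    match p, hp with
    | .nil, _ => exact ⟨u, by simp, by simp⟩
    | .cons h .nil, _ => exact ⟨_, edist_le_one_iff_adj_or_eq.2 (.inl h), by simp⟩
    | .cons h (.cons h' .nil), _ =>
      exact ⟨_, edist_le_one_iff_adj_or_eq.2 (.inl h), edist_le_one_iff_adj_or_eq.2 (.inl h')⟩
    | .cons _ (.cons _ (.cons _ q)), hp =>
      rw [← hp] at h
      have : q.length + 3 ≤ 2 := by exact_mod_cast h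
      omega
  · rintro ⟨w, huw, hwv⟩
    exact G.edist_triangle.trans ((add_le_add huw hwv).trans_eq one_add_one_eq_two)

lemma power_adj_iff {k : ℕ} : (G.power k).Adj u v ↔ u ≠ v ∧ G.edist u v ≤ k := by
  refine and_congr_right fun _ => ⟨fun ⟨h, hk⟩ => ?_, fun h => ?_⟩
  · rw [← h.coe_dist_eq_edist]; exact_mod_cast hk
  · have hr := reachable_of_edist_ne_top (h.trans_lt (ENat.natCast_lt_top k)).ne
    refine ⟨hr, ?_⟩
    rw [← hr.coe_dist_eq_edist] at h; exact_mod_cast h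

end SimpleGraph

lemma Set.mul_inv_mem_mul_iff {G : Type*} [Group G] {A B : Set G} {g h : G} :
    g * h⁻¹ ∈ A * B ↔ ∃ w, g * w⁻¹ ∈ A ∧ w * h⁻¹ ∈ B := by
  constructor
  · rintro ⟨a, ha, b, hb, hab⟩
    refine ⟨a⁻¹ * g, by simpa using ha, ?_⟩
    rwa [mul_assoc, ← hab, inv_mul_cancel_left]
  · rintro ⟨w, hA, hB⟩
    simpa using Set.mul_mem_mul hA hB

namespace SimpleGraph

variable {G : Type*} [Group G] {Γ : SimpleGraph G} {S : Set G}

lemma exists_iso_apply_eq_of_adj_iff (hΓ : ∀ u v, Γ.Adj u v ↔ u * v⁻¹ ∈ S)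
    (u v : G) : ∃ e : Γ ≃g Γ, e u = v :=
  ⟨⟨Equiv.mulRight (u⁻¹ * v), by simp [hΓ, mul_assoc]⟩, by simp⟩

lemma connected_of_adj_iff (hΓ : ∀ u v, Γ.Adj u v ↔ u * v⁻¹ ∈ S)
    (hS : Subgroup.closure S = ⊤) : Γ.Connected := by
  have h : ∀ g, Γ.Reachable 1 g := fun g => by
    induction (hS ▸ Subgroup.mem_top g : g ∈ Subgroup.closure S) using
      Subgroup.closure_induction_left with
    | one => rfl
    | mul_left s hs y _ ih => exact ih.trans (Adj.reachable ((hΓ _ _).2 (by simpa using hs))).symm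
    | inv_mul_cancel s hs y _ ih => exact ih.trans (Adj.reachable ((hΓ _ _).2 (by simpa using hs)))
  exact ⟨fun u v => (h u).symm.trans (h v)⟩

lemma degree_eq_ncard_of_adj_iff [Fintype G] [DecidableRel Γ.Adj]
    (hΓ : ∀ u v, Γ.Adj u v ↔ u * v⁻¹ ∈ S) (v : G) : Γ.degree v = S.ncard := by
  have : Γ.neighborSet v = (fun s => s⁻¹ * v) '' S := by
    ext w
    simp only [mem_neighborSet, hΓ, Set.mem_image]
    exact ⟨fun h => ⟨_, h, by group⟩, by rintro ⟨s, hs, rfl⟩; simpa⟩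
  rw [← card_neighborFinset_eq_degree, neighborFinset_def, ← Set.ncard_eq_toFinset_card', this,
    Set.ncard_image_of_injective _ fun a b h => by simpa using h]

lemma edist_le_one_iff_of_adj_iff (hΓ : ∀ u v, Γ.Adj u v ↔ u * v⁻¹ ∈ S) {u v : G} :
    Γ.edist u v ≤ 1 ↔ u * v⁻¹ ∈ insert 1 S := by
  rw [edist_le_one_iff_adj_or_eq, hΓ, Set.mem_insert_iff, mul_inv_eq_one, or_comm]

lemma edist_le_two_iff_of_adj_iff (hΓ : ∀ u v, Γ.Adj u v ↔ u * v⁻¹ ∈ S) {u v : G} :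
    Γ.edist u v ≤ 2 ↔ u * v⁻¹ ∈ insert 1 S * insert 1 S := by
  simp only [edist_le_two_iff_exists, edist_le_one_iff_of_adj_iff hΓ, Set.mul_inv_mem_mul_iff]

end SimpleGraph

namespace ZMod

lemma natCast_ne_zero_of_lt {n a : ℕ} (h0 : 0 < a) (h : a < n) : (a : ZMod n) ≠ 0 := by
  rw [Ne, natCast_eq_zero_iff]
  exact Nat.not_dvd_of_pos_of_lt h0 h

variable {n : ℕ} [NeZero n]

lemma natAbs_valMinAbs_intCast_le (c : ℤ) : (c : ZMod n).valMinAbs.natAbs ≤ c.natAbs :=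
  natAbs_min_of_le_div_two n _ c (coe_valMinAbs _) (natAbs_valMinAbs_le _)

lemma natAbs_valMinAbs_natCast_of_lt {a : ℕ} (h : a < n) :
    (a : ZMod n).valMinAbs.natAbs = min a (n - a) := by
  rw [valMinAbs_natAbs_eq_min, val_natCast_of_lt h]

end ZMod

namespace Prism

variable {n : ℕ}

def gens (n : ℕ) : Set (DihedralGroup n) := {r 1, (r 1)⁻¹, sr 0}

lemma adj_iff (hn : 3 ≤ n) {u v : DihedralGroup n} : (prism n).Adj u v ↔ u * v⁻¹ ∈ gens n := by
  refine ⟨And.right, fun h => ⟨?_, h⟩⟩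
  rintro rfl
  have h1 : (r 1 : DihedralGroup n) ≠ 1 := by
    rw [one_def, Ne, r.injEq]
    exact_mod_cast ZMod.natCast_ne_zero_of_lt (a := 1) one_pos (by omega)
  rw [mul_inv_cancel] at h
  rcases h with h | h | h
  · exact h1 h.symm
  · exact h1 (inv_eq_one.mp h.symm)
  · nomatch h

lemma ncard_gens (hn : 3 ≤ n) : (gens n).ncard = 3 := by
  have : (2 : ZMod n) ≠ 0 := by
    exact_mod_cast ZMod.natCast_ne_zero_of_lt (a := 2) two_pos (by omega)
  rw [gens, Set.ncard_insert_of_notMem, Set.ncard_pair]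
  · simp
  · simp only [inv_r, Set.mem_insert_iff, r.injEq, Set.mem_singleton_iff, reduceCtorEq, or_false]
    intro h
    exact this (by linear_combination h)

lemma closure_gens : Subgroup.closure (gens n) = ⊤ := by
  refine eq_top_iff.2 fun g _ => ?_
  have hr : ∀ i : ZMod n, r i ∈ Subgroup.closure (gens n) := fun i => by
    rw [← ZMod.intCast_zmod_cast i, ← r_one_zpow]
    exact zpow_mem (Subgroup.subset_closure (by simp [gens])) _
  cases g with
  | r i => exact hr i
  | sr i =>
    rw [← zero_add i, ← sr_mul_r]
    exact mul_mem (Subgroup.subset_closure (by simp [gens])) (hr i)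

def column : DihedralGroup n → ZMod n
  | r i => i
  | sr i => i

def layer : DihedralGroup n → Bool
  | r _ => false
  | sr _ => true

section Ball

variable [NeZero n]

lemma mem_insert_one_gens_iff {g : DihedralGroup n} :
    g ∈ insert 1 (gens n) ↔ (∃ x : ZMod n, x.valMinAbs.natAbs ≤ 1 ∧ g = r x) ∨ g = sr 0 := by
  constructor
  · rintro (rfl | rfl | rfl | rfl)
    · exact .inl ⟨0, by simp, r_zero.symm⟩
    · exact .inl ⟨1, by exact_mod_cast ZMod.natAbs_valMinAbs_intCast_le (n := n) 1, rfl⟩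
    · refine .inl ⟨-1, ?_, inv_r 1⟩
      rw [ZMod.natAbs_valMinAbs_neg]
      exact_mod_cast ZMod.natAbs_valMinAbs_intCast_le (n := n) 1
    · exact .inr rfl
  · rintro (⟨x, hx, rfl⟩ | rfl)
    · have hc := (ZMod.coe_valMinAbs x).symm
      obtain h | h | h : x.valMinAbs = -1 ∨ x.valMinAbs = 0 ∨ x.valMinAbs = 1 := by omega
      all_goals rw [h] at hc; subst hc; simp [gens]
    · simp [gens]

lemma r_mem_ball_iff {x : ZMod n} :
    r x ∈ insert 1 (gens n) * insert 1 (gens n) ↔ x.valMinAbs.natAbs ≤ 2 := by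
  constructor
  · rintro ⟨a, ha, b, hb, hab⟩
    rw [mem_insert_one_gens_iff] at ha hb
    rcases ha with ⟨y, hy, rfl⟩ | rfl <;> rcases hb with ⟨z, hz, rfl⟩ | rfl <;>
      simp only [r_mul_r, r_mul_sr, sr_mul_r, sr_mul_sr, r.injEq, reduceCtorEq] at hab <;>
      subst hab
    · exact (ZMod.natAbs_valMinAbs_add_le y z).trans ((Int.natAbs_add_le _ _).trans (by omega))
    · simp
  · intro h
    set c := x.valMinAbs
    have hsmall (d : ℤ) (hd : d.natAbs ≤ 1) : r (d : ZMod n) ∈ insert 1 (gens n) :=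
      mem_insert_one_gens_iff.2 (.inl ⟨_, (ZMod.natAbs_valMinAbs_intCast_le d).trans hd, rfl⟩)
    refine ⟨_, hsmall (c / 2) (by omega), _, hsmall (c - c / 2) (by omega), ?_⟩
    show r _ * r _ = _
    rw [r_mul_r, ← Int.cast_add, add_sub_cancel, ZMod.coe_valMinAbs]

lemma sr_mem_ball_iff {x : ZMod n} :
    sr x ∈ insert 1 (gens n) * insert 1 (gens n) ↔ x.valMinAbs.natAbs ≤ 1 := by
  constructor
  · rintro ⟨a, ha, b, hb, hab⟩
    rw [mem_insert_one_gens_iff] at ha hb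
    rcases ha with ⟨y, hy, rfl⟩ | rfl <;> rcases hb with ⟨z, hz, rfl⟩ | rfl <;>
      simp only [r_mul_r, r_mul_sr, sr_mul_r, sr_mul_sr, sr.injEq, reduceCtorEq] at hab <;>
      subst hab
    · rwa [zero_sub, ZMod.natAbs_valMinAbs_neg]
    · rwa [zero_add]
  · intro h
    exact ⟨sr 0, by simp [gens], r x, mem_insert_one_gens_iff.2 (.inl ⟨x, h, rfl⟩), by simp⟩

lemma mul_inv_mem_ball_iff {u v : DihedralGroup n} :
    u * v⁻¹ ∈ insert 1 (gens n) * insert 1 (gens n) ↔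
      (column v - column u).valMinAbs.natAbs ≤ if layer u = layer v then 2 else 1 := by
  cases u <;> cases v <;>
    simp only [inv_r, inv_sr, r_mul_r, r_mul_sr, sr_mul_r, sr_mul_sr, r_mem_ball_iff,
      sr_mem_ball_iff, column, layer, Bool.false_eq_true, Bool.true_eq_false, if_true, if_false,
      ← sub_eq_add_neg]
  all_goals rw [← neg_sub, ZMod.natAbs_valMinAbs_neg]

lemma power_two_adj_iff (hn : 3 ≤ n) {u v : DihedralGroup n} :
    ((prism n).power 2).Adj u v ↔
      u ≠ v ∧ (column v - column u).valMinAbs.natAbs ≤ if layer u = layer v then 2 else 1 := by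
  rw [SimpleGraph.power_adj_iff, Nat.cast_ofNat,
    SimpleGraph.edist_le_two_iff_of_adj_iff fun _ _ => adj_iff hn, mul_inv_mem_ball_iff]

end Ball

section UpperBound

variable [NeZero n] {s : Finset (DihedralGroup n)} {u v : DihedralGroup n}

lemma eq_of_column_eq (hn : 3 ≤ n) (hs : ∀ u ∈ s, ∀ v ∈ s, ¬((prism n).power 2).Adj u v)
    (hu : u ∈ s) (hv : v ∈ s) (h : column u = column v) : u = v := by
  by_contra hne
  refine hs u hu v hv ((power_two_adj_iff hn).2 ⟨hne, ?_⟩)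
  rw [h, sub_self, ZMod.valMinAbs_zero]
  exact Nat.zero_le _

lemma column_ne_add_one (hn : 3 ≤ n) (hs : ∀ u ∈ s, ∀ v ∈ s, ¬((prism n).power 2).Adj u v)
    (hu : u ∈ s) (hv : v ∈ s) : column v ≠ column u + 1 := by
  intro h
  refine hs u hu v hv ((power_two_adj_iff hn).2 ⟨?_, ?_⟩)
  · rintro rfl
    rw [left_eq_add] at h
    exact ZMod.natCast_ne_zero_of_lt (n := n) (a := 1) one_pos (by omega) (by exact_mod_cast h)
  · have : (1 : ZMod n).valMinAbs.natAbs ≤ 1 := by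
      exact_mod_cast ZMod.natAbs_valMinAbs_intCast_le (n := n) 1
    rw [h, add_sub_cancel_left]
    split <;> omega

lemma layer_ne_of_column_eq_add_two (hn : 3 ≤ n)
    (hs : ∀ u ∈ s, ∀ v ∈ s, ¬((prism n).power 2).Adj u v) (hu : u ∈ s) (hv : v ∈ s)
    (h : column v = column u + 2) : layer v ≠ layer u := by
  intro hl
  refine hs u hu v hv ((power_two_adj_iff hn).2 ⟨?_, ?_⟩)
  · rintro rfl
    rw [left_eq_add] at h
    exact ZMod.natCast_ne_zero_of_lt (n := n) (a := 2) two_pos (by omega) (by exact_mod_cast h)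
  · have : (2 : ZMod n).valMinAbs.natAbs ≤ 2 := by
      exact_mod_cast ZMod.natAbs_valMinAbs_intCast_le (n := n) 2
    rwa [h, add_sub_cancel_left, if_pos hl.symm]

variable (s) in
def columnCount (p : ZMod n) : ℕ := #{u ∈ s | column u = p}

lemma columnCount_add_columnCount_add_one_le (hn : 3 ≤ n)
    (hs : ∀ u ∈ s, ∀ v ∈ s, ¬((prism n).power 2).Adj u v) (p : ZMod n) :
    columnCount s p + columnCount s (p + 1) ≤ 1 := by
  have hle : ∀ q, columnCount s q ≤ 1 := fun q => card_le_one.2 fun a ha b hb => by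
    rw [mem_filter] at ha hb
    exact eq_of_column_eq hn hs ha.1 hb.1 (ha.2.trans hb.2.symm)
  by_contra! h
  obtain ⟨u, hu⟩ := card_pos.1 (show 0 < columnCount s p by have := hle (p + 1); omega)
  obtain ⟨v, hv⟩ := card_pos.1 (show 0 < columnCount s (p + 1) by have := hle p; omega)
  rw [mem_filter] at hu hv
  exact column_ne_add_one hn hs hu.1 hv.1 (by rw [hu.2, hv.2])

variable (s) in
lemma sum_columnCount_add_columnCount_add_one :
    ∑ p, (columnCount s p + columnCount s (p + 1)) = 2 * #s := by
  have h : ∑ p, columnCount s p = #s :=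
    (card_eq_sum_card_fiberwise fun x _ => mem_univ (column x)).symm
  have h' : ∑ p, columnCount s (p + 1) = #s :=
    (Equiv.sum_comp (Equiv.addRight (1 : ZMod n)) (columnCount s)).trans h
  rw [sum_add_distrib, h, h', two_mul]

lemma two_mul_card_le (hn : 3 ≤ n) (hs : ∀ u ∈ s, ∀ v ∈ s, ¬((prism n).power 2).Adj u v) :
    2 * #s ≤ n := by
  rw [← sum_columnCount_add_columnCount_add_one]
  calc _ ≤ ∑ _ : ZMod n, 1 := sum_le_sum fun p _ => columnCount_add_columnCount_add_one_le hn hs p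
    _ = n := by simp

lemma columnCount_add_columnCount_add_one_eq_one (hn : 3 ≤ n)
    (hs : ∀ u ∈ s, ∀ v ∈ s, ¬((prism n).power 2).Adj u v) (heq : 2 * #s = n) (p : ZMod n) :
    columnCount s p + columnCount s (p + 1) = 1 := by
  by_contra h
  have hlt := sum_lt_sum (fun q _ => columnCount_add_columnCount_add_one_le hn hs q)
    ⟨p, mem_univ p, (columnCount_add_columnCount_add_one_le hn hs p).lt_of_ne h⟩
  rw [sum_columnCount_add_columnCount_add_one, heq] at hlt
  simp at hlt

lemma exists_mem_column_eq_add_two (hn : 3 ≤ n)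
    (hs : ∀ u ∈ s, ∀ v ∈ s, ¬((prism n).power 2).Adj u v) (heq : 2 * #s = n) (hu : u ∈ s) :
    ∃ v ∈ s, column v = column u + 2 := by
  have h₀ := columnCount_add_columnCount_add_one_eq_one hn hs heq (column u)
  have h₁ := columnCount_add_columnCount_add_one_eq_one hn hs heq (column u + 1)
  have hpos : 0 < columnCount s (column u) := card_pos.2 ⟨u, mem_filter.2 ⟨hu, rfl⟩⟩
  rw [add_assoc, one_add_one_eq_two] at h₁
  obtain ⟨v, hv⟩ := card_pos.1 (show 0 < columnCount s (column u + 2) by omega)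
  exact ⟨v, (mem_filter.1 hv).1, (mem_filter.1 hv).2⟩

lemma exists_mem_column_eq_add_two_mul (hn : 3 ≤ n)
    (hs : ∀ u ∈ s, ∀ v ∈ s, ¬((prism n).power 2).Adj u v) (heq : 2 * #s = n) {u₀ : DihedralGroup n}
    (hu₀ : u₀ ∈ s) (j : ℕ) :
    ∃ u ∈ s, column u = column u₀ + 2 * j ∧ (layer u = layer u₀ ↔ Even j) := by
  induction j with
  | zero => exact ⟨u₀, hu₀, by simp, by simp⟩
  | succ j ih =>
    obtain ⟨u, hu, hpos, hlayer⟩ := ih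
    obtain ⟨v, hv, hv'⟩ := exists_mem_column_eq_add_two hn hs heq hu
    refine ⟨v, hv, by rw [hv', hpos]; push_cast; ring, ?_⟩
    have hflip := layer_ne_of_column_eq_add_two hn hs hu hv hv'
    rw [Nat.even_add_one, ← hlayer]
    revert hflip
    cases layer v <;> cases layer u <;> cases layer u₀ <;> decide

lemma two_mul_card_ne (hn : 3 ≤ n) (h4 : n % 4 = 2)
    (hs : ∀ u ∈ s, ∀ v ∈ s, ¬((prism n).power 2).Adj u v) : 2 * #s ≠ n := by
  intro heq
  obtain ⟨u₀, hu₀⟩ := card_pos.1 (by omega : 0 < #s)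
  obtain ⟨u, hu, hpos, hlayer⟩ := exists_mem_column_eq_add_two_mul hn hs heq hu₀ (n / 2)
  have hn2 : 2 * ((n / 2 : ℕ) : ZMod n) = 0 := by
    rw [← Nat.cast_ofNat, ← Nat.cast_mul, show 2 * (n / 2) = n by omega, ZMod.natCast_self]
  rw [hn2, add_zero] at hpos
  obtain rfl := eq_of_column_eq hn hs hu hu₀ hpos
  have : ¬Even (n / 2) := by rw [Nat.not_even_iff_odd, Nat.odd_iff]; omega
  exact this (hlayer.1 rfl)

end UpperBound

section LowerBound

def zigzag (j : ℕ) : DihedralGroup n := if Even j then r (2 * j) else sr (2 * j)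

lemma column_zigzag (j : ℕ) : column (zigzag j : DihedralGroup n) = 2 * j := by
  unfold zigzag; split <;> rfl

lemma layer_zigzag_eq_iff (i j : ℕ) :
    layer (zigzag i : DihedralGroup n) = layer (zigzag j : DihedralGroup n) ↔
      (Even i ↔ Even j) := by
  unfold zigzag; split_ifs <;> simp_all [layer, ← Nat.not_odd_iff_even]

lemma zigzag_injOn {m : ℕ} (hm : 2 * m ≤ n) :
    Set.InjOn (zigzag : ℕ → DihedralGroup n) (range m) := by
  intro i hi j hj h
  simp only [coe_range, Set.mem_Iio] at hi hj
  have h2 := congrArg ZMod.val (congrArg column h)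
  rw [column_zigzag, column_zigzag, ← Nat.cast_ofNat, ← Nat.cast_mul, ← Nat.cast_mul,
    ZMod.val_natCast_of_lt (by omega), ZMod.val_natCast_of_lt (by omega)] at h2
  omega

variable [NeZero n]

lemma not_power_two_adj_zigzag (hn : 3 ≤ n) {m i j : ℕ} (hm : 2 * m ≤ n)
    (hm' : n % 4 = 2 → 2 * m < n) (hij : i < j) (hj : j < m) :
    ¬((prism n).power 2).Adj (zigzag i) (zigzag j) := by
  rw [power_two_adj_iff hn, column_zigzag, column_zigzag]
  rintro ⟨-, h⟩
  simp only [layer_zigzag_eq_iff] at h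
  have hd : (2 * j - 2 * i : ZMod n) = ((2 * (j - i) : ℕ) : ZMod n) := by
    push_cast [Nat.cast_sub hij.le]; ring
  rw [hd, ZMod.natAbs_valMinAbs_natCast_of_lt (by omega)] at h
  simp only [Nat.even_iff] at h
  split_ifs at h <;> omega

lemma exists_card_eq_of_two_mul_le (hn : 3 ≤ n) {m : ℕ} (hm : 2 * m ≤ n)
    (hm' : n % 4 = 2 → 2 * m < n) :
    ∃ s : Finset (DihedralGroup n), #s = m ∧ ∀ u ∈ s, ∀ v ∈ s, ¬((prism n).power 2).Adj u v := by
  refine ⟨(range m).image zigzag, (card_image_of_injOn (zigzag_injOn hm)).trans (card_range m), ?_⟩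
  simp only [mem_image, mem_range, forall_exists_index, and_imp]
  rintro _ i hi rfl _ j hj rfl
  rcases lt_trichotomy i j with h | rfl | h
  · exact not_power_two_adj_zigzag hn hm hm' h hj
  · exact SimpleGraph.irrefl _
  · exact fun hadj => not_power_two_adj_zigzag hn hm hm' h hi hadj.symm

end LowerBound

end Prism

/-- For each `n ≥ 3`, the prism graph `Γₙ` is a connected `3`-regular vertex-transitive
graph on `2n` vertices, and its `2`-independence number equals `2⌊n/4⌋` if
`n ≡ 0, 1, 2 (mod 4)` and `2⌊n/4⌋ + 1` if `n ≡ 3 (mod 4)`. -/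
theorem prism_alpha2 (n : ℕ) [NeZero n] (hn : 3 ≤ n) [DecidableRel (prism n).Adj] :
    (prism n).Connected ∧
    (prism n).IsRegularOfDegree 3 ∧
    Fintype.card (DihedralGroup n) = 2 * n ∧
    (∀ u v : DihedralGroup n, ∃ e : prism n ≃g prism n, e u = v) ∧
    (prism n).kIndepNum 2 = (if n % 4 = 3 then 2 * (n / 4) + 1 else 2 * (n / 4)) := by
  have hadj : ∀ u v, (prism n).Adj u v ↔ u * v⁻¹ ∈ Prism.gens n := fun _ _ => Prism.adj_iff hn
  refine ⟨connected_of_adj_iff hadj Prism.closure_gens,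
    fun v => (degree_eq_ncard_of_adj_iff hadj v).trans (Prism.ncard_gens hn), DihedralGroup.card,
    exists_iso_apply_eq_of_adj_iff hadj, ?_⟩
  rw [kIndepNum, indepNumFin]
  refine IsGreatest.csSup_eq ⟨Prism.exists_card_eq_of_two_mul_le hn ?_ ?_, ?_⟩
  · split_ifs <;> omega
  · split_ifs <;> omega
  · rintro _ ⟨s, rfl, hs⟩
    have hle := Prism.two_mul_card_le hn hs
    have hne := fun h4 => Prism.two_mul_card_ne hn h4 hs
    split_ifs <;> omega
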